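/- arXiv:2105.14596 — 6 statements merged into one kernel-verified Lean document; each statement's English description precedes it below -/
import Mathlib

section
/- Let (γₙ), (βₙ) be sequences of nonnegative reals with n(γₙ² + βₙ²) → c for a finite constant c ≥ 0, and define Kₙ = γₙβₙ / √(n⁻¹(n⁻¹ + γₙ² + βₙ²)). Then limsup Kₙ ≤ c/√(1 + c). In particular, if c < (1+√5)/2 (the golden ratio) then limsup Kₙ < 1. -/
/-!
Since `2γβ ≤ γ² + β²`, with `xₙ = n(γₙ² + βₙ²)` we get
`|Kₙ| ≤ xₙ / (2√(1 + xₙ)) → c / (2√(1 + c))`, so `limsup Kₙ ≤ c / √(1 + c)`.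
For `0 ≤ c < φ` we have `c² < 1 + c` because `c² - c - 1 = (c - φ)(c - ψ)`, i.e. `c < √(1 + c)`.
-/

open Filter Topology Real goldenRatio

lemma sqrt_inv_mul_inv_add {n : ℝ} (hn : 0 < n) {s : ℝ} (hs : 0 ≤ s) :
    √(n⁻¹ * (n⁻¹ + s)) = √(1 + n * s) / n := by
  have hsq : n⁻¹ * (n⁻¹ + s) = (1 + n * s) / n ^ 2 := by
    field_simp
  rw [hsq, sqrt_div (by positivity), sqrt_sq hn.le]

lemma abs_mul_div_sqrt_le {n : ℝ} (hn : 0 < n) (a b : ℝ) :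
    |a * b / √(n⁻¹ * (n⁻¹ + a ^ 2 + b ^ 2))| ≤
      n * (a ^ 2 + b ^ 2) / (2 * √(1 + n * (a ^ 2 + b ^ 2))) := by
  have hab : 2 * |a * b| ≤ a ^ 2 + b ^ 2 := by
    simpa [abs_mul, mul_assoc] using two_mul_le_add_sq |a| |b|
  have hroot : 0 < √(1 + n * (a ^ 2 + b ^ 2)) := sqrt_pos.mpr (by positivity)
  rw [add_assoc, sqrt_inv_mul_inv_add hn (by positivity), abs_div,
    abs_of_pos (div_pos hroot hn), div_div_eq_mul_div, div_le_div_iff₀ hroot (by positivity)]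
  nlinarith [mul_le_mul_of_nonneg_right hab (mul_nonneg hn.le hroot.le)]

lemma limsup_le_of_abs_le_of_tendsto {α : Type*} {l : Filter α} [l.NeBot] {u v : α → ℝ}
    {L : ℝ} (huv : ∀ᶠ a in l, |u a| ≤ v a) (hv : Tendsto v l (𝓝 L)) :
    limsup u l ≤ L := by
  obtain ⟨M, hM⟩ := hv.isBoundedUnder_le
  have hu_below : IsBoundedUnder (· ≥ ·) l u := isBoundedUnder_of_eventually_ge (a := -M) <| by
    filter_upwards [huv, (hM : ∀ᶠ a in l, v a ≤ M)] with a ha haM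
    exact (neg_le_neg haM).trans ((neg_le_neg ha).trans (neg_abs_le _))
  calc limsup u l ≤ limsup v l :=
        limsup_le_limsup (huv.mono fun _ ha => (le_abs_self _).trans ha)
          hu_below.isCoboundedUnder_le hv.isBoundedUnder_le
    _ = L := hv.limsup_eq

lemma sq_lt_one_add_of_lt_goldenRatio {c : ℝ} (hc : 0 ≤ c) (hcφ : c < φ) : c ^ 2 < 1 + c := by
  have hfactor : c ^ 2 - c - 1 = (c - φ) * (c - ψ) := by
    linear_combination c * goldenRatio_add_goldenConj - goldenRatio_mul_goldenConj
  nlinarith [goldenConj_neg]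

lemma div_sqrt_one_add_lt_one {c : ℝ} (hc : 0 ≤ c) (hcφ : c < φ) : c / √(1 + c) < 1 := by
  rw [div_lt_one (sqrt_pos.mpr (by linarith))]
  exact (lt_sqrt hc).mpr (sq_lt_one_add_of_lt_goldenRatio hc hcφ)

theorem stmt4_general (γ β : ℕ → ℝ)
    (c : ℝ) (hc : 0 ≤ c)
    (h : Tendsto (fun n : ℕ => (n : ℝ) * ((γ n) ^ 2 + (β n) ^ 2)) atTop (nhds c))
    (K : ℕ → ℝ)
    (hK : ∀ n, K n = γ n * β n /
        Real.sqrt ((n : ℝ)⁻¹ * ((n : ℝ)⁻¹ + (γ n) ^ 2 + (β n) ^ 2))) :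
    limsup K atTop ≤ c / Real.sqrt (1 + c) ∧
      (c < (1 + Real.sqrt 5) / 2 → limsup K atTop < 1) := by
  have hroot : 0 < √(1 + c) := sqrt_pos.mpr (by linarith)
  have hK_abs : ∀ᶠ n : ℕ in atTop, |K n| ≤
      n * (γ n ^ 2 + β n ^ 2) / (2 * √(1 + n * (γ n ^ 2 + β n ^ 2))) := by
    filter_upwards [eventually_gt_atTop 0] with n hn
    rw [hK n]
    exact abs_mul_div_sqrt_le (Nat.cast_pos.mpr hn) _ _
  have hbound_lim : Tendsto (fun n : ℕ => n * (γ n ^ 2 + β n ^ 2) /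
      (2 * √(1 + n * (γ n ^ 2 + β n ^ 2)))) atTop (𝓝 (c / (2 * √(1 + c)))) :=
    h.div (tendsto_const_nhds.mul (h.const_add 1).sqrt) (by positivity)
  have hlimsup : limsup K atTop ≤ c / √(1 + c) :=
    (limsup_le_of_abs_le_of_tendsto hK_abs hbound_lim).trans
      (div_le_div_of_nonneg_left hc hroot (by linarith))
  exact ⟨hlimsup, fun hcφ => hlimsup.trans_lt (div_sqrt_one_add_lt_one hc hcφ)⟩

theorem stmt4 (γ β : ℕ → ℝ) (hγ : ∀ n, 0 ≤ γ n) (hβ : ∀ n, 0 ≤ β n)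
    (c : ℝ) (hc : 0 ≤ c)
    (h : Tendsto (fun n : ℕ => (n : ℝ) * ((γ n) ^ 2 + (β n) ^ 2)) atTop (nhds c))
    (K : ℕ → ℝ)
    (hK : ∀ n, K n = γ n * β n /
        Real.sqrt ((n : ℝ)⁻¹ * ((n : ℝ)⁻¹ + (γ n) ^ 2 + (β n) ^ 2))) :
    limsup K atTop ≤ c / Real.sqrt (1 + c) ∧
      (c < (1 + Real.sqrt 5) / 2 → limsup K atTop < 1) :=
  stmt4_general γ β c hc h K hK
end

section
/- Let Z₁, Z₂ be independent standard normal random variables and σ₁, σ₂ > 0. Define g(h₁,h₂) = (h₁ + Z₁)(h₂ + Z₂)/√(σ₂²(h₁ + Z₁)² + σ₁²(h₂ + Z₂)²). Then the distribution of g(0,0) differs from the distribution of g(1,0); in particular, Sobel's statistic is not a regular estimator at (0,0): the limit law of √n(Tₙ − ψ(θₙ)) along local sequences θₙ = (h₁/√n, h₂/√n) depends on (h₁,h₂). -/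
/-!
We compare second moments: `E[g(0,0)²] < E[g(1,0)²]`. Conditionally on `Z₂ = y ≠ 0`,
`g(h,0)² = f(|h + Z₁|)` with `f t = t²y² / (σ₂²t² + σ₁²y²)` bounded and strictly increasing on
`[0, ∞)`, so it suffices that `E f(|Z|) < E f(|1 + Z|)` for a standard normal `Z`. Since
`f(|·|)` is even, `2 (E f(|1 + Z|) - E f(|Z|)) = ∫ f(|u|) W(u) du` with
`W(u) = φ(u - 1) + φ(u + 1) - 2 φ(u) = 2 φ(u) e^{-1/2} (cosh u - e^{1/2})`. Now `W` has total
mass `0` and, like `f(|u|) - f(c)`, changes sign exactly at `|u| = c`, where `cosh c = e^{1/2}`;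
hence `∫ f(|u|) W(u) du = ∫ (f(|u|) - f(c)) W(u) du > 0`.
-/

open MeasureTheory ProbabilityTheory Real Set

lemma integral_lt_integral_of_ae_lt {α : Type*} [MeasurableSpace α] {μ : Measure α} [NeZero μ]
    {f g : α → ℝ} (hf : Integrable f μ) (hg : Integrable g μ) (hfg : ∀ᵐ x ∂μ, f x < g x) :
    ∫ x, f x ∂μ < ∫ x, g x ∂μ := by
  rw [← sub_pos, ← integral_sub hg hf,
    integral_pos_iff_support_of_nonneg_ae (hfg.mono fun x hx => (sub_pos.2 hx).le) (hg.sub hf),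
    pos_iff_ne_zero]
  intro hzero
  have hae : ∀ᵐ x ∂μ, g x - f x = 0 := by
    rw [ae_iff]; simpa [Function.support] using hzero
  obtain ⟨x, hlt, heq⟩ := (hfg.and hae).exists
  linarith

lemma integral_mul_pos_of_sub_mul_nonneg {α : Type*} [MeasurableSpace α] {μ : Measure α}
    {F W : α → ℝ} (K : ℝ) (hW : Integrable W μ) (hFW : Integrable (fun x => F x * W x) μ)
    (hW₀ : ∫ x, W x ∂μ = 0) (hsign : ∀ x, 0 ≤ (F x - K) * W x)
    (hpos : 0 < μ (Function.support fun x => (F x - K) * W x)) :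
    0 < ∫ x, F x * W x ∂μ := by
  have hKW : Integrable (fun x => K * W x) μ := hW.const_mul K
  have hint : Integrable (fun x => (F x - K) * W x) μ := by
    convert hFW.sub hKW using 1; ext x; exact sub_mul _ _ _
  calc 0 < ∫ x, (F x - K) * W x ∂μ := (integral_pos_iff_support_of_nonneg hsign hint).2 hpos
    _ = ∫ x, F x * W x ∂μ := by
      simp only [sub_mul]
      rw [integral_sub hFW hKW, integral_const_mul, hW₀, mul_zero, sub_zero]

lemma gaussianPDFReal_one_add_gaussianPDFReal_neg_one (u : ℝ) :
    gaussianPDFReal 1 1 u + gaussianPDFReal (-1) 1 u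
      = 2 * exp (-(1 / 2)) * cosh u * gaussianPDFReal 0 1 u := by
  simp only [gaussianPDFReal_def, cosh_eq, NNReal.coe_one, mul_one]
  rw [show -(u - 1) ^ 2 / 2 = -(1 / 2) + u + -(u - 0) ^ 2 / 2 by ring,
    show -(u - -1) ^ 2 / 2 = -(1 / 2) + -u + -(u - 0) ^ 2 / 2 by ring]
  simp only [exp_add]
  ring

noncomputable def gaussianSecondDiff (u : ℝ) : ℝ :=
  gaussianPDFReal 1 1 u + gaussianPDFReal (-1) 1 u - 2 * gaussianPDFReal 0 1 u

lemma gaussianSecondDiff_eq (u : ℝ) :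
    gaussianSecondDiff u
      = 2 * exp (-(1 / 2)) * gaussianPDFReal 0 1 u * (cosh u - exp (1 / 2)) := by
  have h : exp (-(1 / 2)) * exp (1 / 2) = 1 := by rw [← exp_add]; norm_num
  rw [gaussianSecondDiff, gaussianPDFReal_one_add_gaussianPDFReal_neg_one]
  linear_combination 2 * gaussianPDFReal 0 1 u * h

lemma integrable_gaussianPDFReal_mul {G : ℝ → ℝ} (hG : AEStronglyMeasurable G) {C : ℝ}
    (hbdd : ∀ u, |G u| ≤ C) (m : ℝ) : Integrable fun u => gaussianPDFReal m 1 u * G u :=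
  (integrable_gaussianPDFReal m 1).mul_bdd hG (ae_of_all _ hbdd)

lemma integrable_mul_gaussianSecondDiff {G : ℝ → ℝ} (hG : AEStronglyMeasurable G) {C : ℝ}
    (hbdd : ∀ u, |G u| ≤ C) : Integrable fun u => G u * gaussianSecondDiff u := by
  have h := integrable_gaussianPDFReal_mul hG hbdd
  convert ((h 1).add (h (-1))).sub ((h 0).const_mul 2) using 1
  ext u
  simp only [gaussianSecondDiff, Pi.add_apply, Pi.sub_apply]
  ring

lemma integral_mul_gaussianSecondDiff {G : ℝ → ℝ} (hG : AEStronglyMeasurable G) {C : ℝ}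
    (hbdd : ∀ u, |G u| ≤ C) :
    ∫ u, G u * gaussianSecondDiff u
      = ∫ u, G u ∂gaussianReal 1 1 + ∫ u, G u ∂gaussianReal (-1) 1
        - 2 * ∫ u, G u ∂gaussianReal 0 1 := by
  have h := integrable_gaussianPDFReal_mul hG hbdd
  simp only [integral_gaussianReal_eq_integral_smul one_ne_zero, smul_eq_mul]
  rw [← integral_const_mul, ← integral_add (h 1) (h (-1)), ← integral_sub ?_ ((h 0).const_mul 2)]
  · congr 1 with u
    simp only [gaussianSecondDiff]
    ring
  · exact (h 1).add (h (-1))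

lemma integrable_gaussianSecondDiff : Integrable gaussianSecondDiff := by
  simpa using integrable_mul_gaussianSecondDiff (G := fun _ => 1) aestronglyMeasurable_const
    (fun _ => abs_one.le)

lemma integral_gaussianSecondDiff : ∫ u, gaussianSecondDiff u = 0 := by
  simpa [one_add_one_eq_two] using integral_mul_gaussianSecondDiff (G := fun _ => 1)
    aestronglyMeasurable_const (fun _ => abs_one.le)

lemma integral_gaussianReal_comp_abs_lt_comp_abs_one_add {f : ℝ → ℝ}
    (hmono : StrictMonoOn f (Ici 0)) (hcont : Continuous f) {C : ℝ} (hbdd : ∀ t, |f t| ≤ C) :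
    ∫ x, f |x| ∂gaussianReal 0 1 < ∫ x, f |1 + x| ∂gaussianReal 0 1 := by
  set F : ℝ → ℝ := fun u => f |u| with hF
  have hFm : Measurable F := (hcont.comp continuous_abs).measurable
  have hFbdd : ∀ u, |F u| ≤ C := fun u => hbdd |u|
  have hshift : ∫ x, F (1 + x) ∂gaussianReal 0 1 = ∫ u, F u ∂gaussianReal 1 1 := by
    rw [← integral_map (by fun_prop) hFm.aestronglyMeasurable, gaussianReal_map_const_add, zero_add]
  have hreflect : ∫ u, F u ∂gaussianReal (-1) 1 = ∫ u, F u ∂gaussianReal 1 1 := by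
    rw [← gaussianReal_map_neg, integral_map (by fun_prop) hFm.aestronglyMeasurable]
    simp only [hF, abs_neg]
  set c := arcosh (exp (1 / 2))
  have hc : 0 ≤ c := arcosh_nonneg (one_le_exp (by norm_num))
  have hW : ∀ u, gaussianSecondDiff u
      = 2 * exp (-(1 / 2)) * gaussianPDFReal 0 1 u * (cosh |u| - cosh |c|) := by
    intro u
    rw [cosh_abs, cosh_abs, cosh_arcosh (one_le_exp (by norm_num)), gaussianSecondDiff_eq]
  have hw : ∀ u, 0 < 2 * exp (-(1 / 2)) * gaussianPDFReal 0 1 u := fun u => by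
    have := gaussianPDFReal_pos 0 1 u one_ne_zero
    positivity
  have hsign : ∀ u, 0 ≤ (F u - F c) * gaussianSecondDiff u := by
    intro u
    rw [hW, mul_left_comm]
    exact mul_nonneg (hw u).le <| (hmono.monotoneOn.monovaryOn cosh_strictMonoOn.monotoneOn)
      |>.sub_mul_sub_nonneg (abs_nonneg c) (abs_nonneg u)
  have hpos : 0 < volume (Function.support fun u => (F u - F c) * gaussianSecondDiff u) := by
    refine lt_of_lt_of_le (by simp [volume_Ioi]) (measure_mono (s := Ioi c) fun u hu => ?_)
    have hcu : |c| < |u| := by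
      rw [abs_of_nonneg hc, abs_of_nonneg (hc.trans hu.le)]; exact hu
    rw [Function.mem_support, hW]
    refine mul_ne_zero (sub_ne_zero.2 (hmono (abs_nonneg c) (abs_nonneg u) hcu).ne') ?_
    exact mul_ne_zero (hw u).ne'
      (sub_ne_zero.2 (cosh_strictMonoOn (abs_nonneg c) (abs_nonneg u) hcu).ne')
  have key := integral_mul_pos_of_sub_mul_nonneg (F c) integrable_gaussianSecondDiff
    (integrable_mul_gaussianSecondDiff hFm.aestronglyMeasurable hFbdd)
    integral_gaussianSecondDiff hsign hpos
  rw [integral_mul_gaussianSecondDiff hFm.aestronglyMeasurable hFbdd, hreflect] at key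
  change ∫ x, F x ∂gaussianReal 0 1 < ∫ x, F (1 + x) ∂gaussianReal 0 1
  linarith

noncomputable def sobel (σ₁ σ₂ x y : ℝ) : ℝ := x * y / √(σ₂ ^ 2 * x ^ 2 + σ₁ ^ 2 * y ^ 2)

section Sobel

variable {σ₁ σ₂ : ℝ}

lemma sobel_sq (x y : ℝ) :
    sobel σ₁ σ₂ x y ^ 2 = x ^ 2 * y ^ 2 / (σ₂ ^ 2 * x ^ 2 + σ₁ ^ 2 * y ^ 2) := by
  rw [sobel, div_pow, sq_sqrt (by positivity), mul_pow]

lemma sobel_sq_le (hσ₂ : σ₂ ≠ 0) (x y : ℝ) : sobel σ₁ σ₂ x y ^ 2 ≤ y ^ 2 / σ₂ ^ 2 := by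
  rcases eq_or_ne x 0 with rfl | hx
  · rw [sobel_sq, zero_pow two_ne_zero, zero_mul, zero_div]
    positivity
  calc sobel σ₁ σ₂ x y ^ 2 ≤ x ^ 2 * y ^ 2 / (σ₂ ^ 2 * x ^ 2) := by
        rw [sobel_sq]
        exact div_le_div_of_nonneg_left (by positivity) (by positivity)
          (le_add_of_nonneg_right (by positivity))
    _ = y ^ 2 / σ₂ ^ 2 := by field_simp

lemma strictMonoOn_sobel_sq (hσ₁ : σ₁ ≠ 0) {y : ℝ} (hy : y ≠ 0) :
    StrictMonoOn (fun t => sobel σ₁ σ₂ t y ^ 2) (Ici 0) := by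
  intro s hs t ht hst
  have hb : 0 < σ₁ ^ 2 * y ^ 2 := by positivity
  have hst2 : s ^ 2 < t ^ 2 := by nlinarith [mem_Ici.1 hs]
  simp only [sobel_sq]
  rw [div_lt_div_iff₀ (by positivity) (by positivity)]
  nlinarith [mul_lt_mul_of_pos_right hst2 (mul_pos hb (by positivity : 0 < y ^ 2))]

lemma continuous_sobel_sq (hσ₁ : σ₁ ≠ 0) {y : ℝ} (hy : y ≠ 0) :
    Continuous fun t => sobel σ₁ σ₂ t y ^ 2 := by
  simp only [sobel_sq]
  exact Continuous.div (by fun_prop) (by fun_prop) fun t => by positivity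

lemma integral_sobel_sq_lt_integral_sobel_sq_one_add (hσ₁ : σ₁ ≠ 0) (hσ₂ : σ₂ ≠ 0) {y : ℝ}
    (hy : y ≠ 0) :
    ∫ x, sobel σ₁ σ₂ x y ^ 2 ∂gaussianReal 0 1
      < ∫ x, sobel σ₁ σ₂ (1 + x) y ^ 2 ∂gaussianReal 0 1 := by
  have h := integral_gaussianReal_comp_abs_lt_comp_abs_one_add
    (strictMonoOn_sobel_sq (σ₂ := σ₂) hσ₁ hy) (continuous_sobel_sq hσ₁ hy) (C := y ^ 2 / σ₂ ^ 2)
    (fun t => (abs_of_nonneg (sq_nonneg _)).trans_le (sobel_sq_le hσ₂ t y))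
  simpa only [sobel_sq, sq_abs] using h

lemma integrable_sobel_sq (hσ₂ : σ₂ ≠ 0) (h : ℝ) :
    Integrable (fun p : ℝ × ℝ => sobel σ₁ σ₂ (h + p.1) p.2 ^ 2)
      ((gaussianReal 0 1).prod (gaussianReal 0 1)) := by
  have hsnd : Integrable (fun p : ℝ × ℝ => p.2 ^ 2 / σ₂ ^ 2)
      ((gaussianReal 0 1).prod (gaussianReal 0 1)) :=
    ((memLp_id_gaussianReal 2).integrable_sq.comp_snd _).div_const _
  have hmeas : Measurable fun p : ℝ × ℝ => sobel σ₁ σ₂ (h + p.1) p.2 ^ 2 := by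
    unfold sobel
    fun_prop
  refine hsnd.mono' hmeas.aestronglyMeasurable (ae_of_all _ fun p => ?_)
  rw [Real.norm_eq_abs, abs_of_nonneg (sq_nonneg _)]
  exact sobel_sq_le hσ₂ _ _

theorem integral_prod_sobel_sq_lt (hσ₁ : σ₁ ≠ 0) (hσ₂ : σ₂ ≠ 0) :
    ∫ p, sobel σ₁ σ₂ p.1 p.2 ^ 2 ∂(gaussianReal 0 1).prod (gaussianReal 0 1)
      < ∫ p, sobel σ₁ σ₂ (1 + p.1) p.2 ^ 2 ∂(gaussianReal 0 1).prod (gaussianReal 0 1) := by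
  have h₀ := integrable_sobel_sq (σ₁ := σ₁) hσ₂ 0
  simp only [zero_add] at h₀
  have h₁ := integrable_sobel_sq (σ₁ := σ₁) hσ₂ 1
  rw [integral_prod_symm _ h₀, integral_prod_symm _ h₁]
  refine integral_lt_integral_of_ae_lt h₀.integral_prod_right h₁.integral_prod_right ?_
  filter_upwards [(gaussianReal_absolutelyContinuous 0 one_ne_zero).ae_le (volume.ae_ne 0)]
    with y hy
  exact integral_sobel_sq_lt_integral_sobel_sq_one_add hσ₁ hσ₂ hy

end Sobel

theorem stmt11 {Ω : Type*} [MeasurableSpace Ω] (μ : Measure Ω) [IsProbabilityMeasure μ]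
    (Z₁ Z₂ : Ω → ℝ) (hmeas1 : Measurable Z₁) (hmeas2 : Measurable Z₂)
    (hZ₁ : μ.map Z₁ = gaussianReal 0 1)
    (hZ₂ : μ.map Z₂ = gaussianReal 0 1)
    (hind : IndepFun Z₁ Z₂ μ)
    (σ₁ σ₂ : ℝ) (h₁ : 0 < σ₁) (h₂ : 0 < σ₂)
    (g : ℝ → ℝ → Ω → ℝ)
    (hg : ∀ h₁' h₂' ω, g h₁' h₂' ω = (h₁' + Z₁ ω) * (h₂' + Z₂ ω) /
        Real.sqrt (σ₂ ^ 2 * (h₁' + Z₁ ω) ^ 2 + σ₁ ^ 2 * (h₂' + Z₂ ω) ^ 2)) :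
    μ.map (g 0 0) ≠ μ.map (g 1 0) := by
  have hjoint : μ.map (fun ω => (Z₁ ω, Z₂ ω)) = (gaussianReal 0 1).prod (gaussianReal 0 1) := by
    rw [(indepFun_iff_map_prod_eq_prod_map_map hmeas1.aemeasurable hmeas2.aemeasurable).1 hind,
      hZ₁, hZ₂]
  have hmoment : ∀ h : ℝ, ∫ t, t ^ 2 ∂μ.map (g h 0)
      = ∫ p, sobel σ₁ σ₂ (h + p.1) p.2 ^ 2 ∂(gaussianReal 0 1).prod (gaussianReal 0 1) := by
    intro h
    have hsobel : Measurable fun p : ℝ × ℝ => sobel σ₁ σ₂ (h + p.1) p.2 := by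
      unfold sobel
      fun_prop
    have hlaw :
        g h 0 = (fun p : ℝ × ℝ => sobel σ₁ σ₂ (h + p.1) p.2) ∘ fun ω => (Z₁ ω, Z₂ ω) := by
      funext ω
      simp [hg, sobel]
    rw [hlaw, ← Measure.map_map hsobel (by fun_prop), hjoint,
      integral_map hsobel.aemeasurable (by fun_prop)]
  intro hlaw
  have h := hmoment 0
  rw [hlaw, hmoment 1] at h
  simp only [zero_add] at h
  exact (integral_prod_sobel_sq_lt h₁.ne' h₂.ne').ne h.symm
end

section
/- Let (Tₙ) be estimators and (T̃ₙ) shrinkage estimators with T̃ₙ = (Tₙ − ψ(θ₀))·1_{Aₙ} + ψ(θ₀), where Aₙ is the un-filtering event. Suppose P(Aₙᶜ) → 1 (the filtering probability converges to 1), the normalized sequence (Tₙ − ψ(θₙ))²/σ_{Tₙ}² is uniformly integrable with E[(Tₙ − ψ(θₙ))²] = σ_{Tₙ}²(1 + o(1)) (asymptotically unbiased with matching variance), and (ψ(θₙ) − ψ(θ₀))/σ_{Tₙ} → K ∈ [0, ∞]. Then MSE(T̃ₙ)/MSE(Tₙ) → K². In particular, the shrinkage estimator is asymptotically more efficient than Tₙ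 iff K < 1, equivalent iff K = 1, and less efficient iff K > 1. -/
/-!
After division by `σₙ²`, the mean squared error of the shrinkage estimator splits into the
integral over `Aₙ` of the normalized squared error, which vanishes by uniform integrability
because `μ Aₙ → 0`, and `μ Aₙᶜ · ((ψ(θₙ) - ψ₀) / σₙ)² → K²`; the mean squared error of `Tₙ`
divided by `σₙ²` tends to `1`.
-/

open MeasureTheory Filter Topology

namespace MeasureTheory

variable {Ω ι β : Type*} [MeasurableSpace Ω] {μ : Measure Ω} [NormedAddCommGroup β]

theorem UnifIntegrable.tendsto_eLpNorm_indicator {f : ι → Ω → β} {p : ENNReal}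
    (hf : UnifIntegrable f p μ) {l : Filter ι} {s : ι → Set Ω} (hs : ∀ i, MeasurableSet (s i))
    (hμs : Tendsto (fun i => μ (s i)) l (𝓝 0)) :
    Tendsto (fun i => eLpNorm ((s i).indicator (f i)) p μ) l (𝓝 0) := by
  refine ENNReal.tendsto_nhds_zero.2 fun ε hε => ?_
  rcases eq_or_ne ε ⊤ with rfl | hε_top
  · exact Eventually.of_forall fun _ => le_top
  obtain ⟨δ, hδ, hsmall⟩ := hf (ENNReal.toReal_pos hε.ne' hε_top)
  filter_upwards [ENNReal.tendsto_nhds_zero.1 hμs _ (ENNReal.ofReal_pos.2 hδ)] with i hi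
  simpa [ENNReal.ofReal_toReal hε_top] using hsmall i (s i) (hs i) hi

theorem UnifIntegrable.tendsto_setIntegral [NormedSpace ℝ β] {f : ι → Ω → β}
    (hf : UnifIntegrable f 1 μ) {l : Filter ι} {s : ι → Set Ω} (hs : ∀ i, MeasurableSet (s i))
    (hμs : Tendsto (fun i => μ (s i)) l (𝓝 0)) :
    Tendsto (fun i => ∫ ω in s i, f i ω ∂μ) l (𝓝 0) := by
  refine tendsto_zero_iff_enorm_tendsto_zero.2 <|
    tendsto_of_tendsto_of_tendsto_of_le_of_le tendsto_const_nhds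
      (hf.tendsto_eLpNorm_indicator hs hμs) (fun _ => bot_le) fun i => ?_
  rw [← integral_indicator (hs i), eLpNorm_one_eq_lintegral_enorm]
  exact enorm_integral_le_lintegral_enorm _

theorem integral_sq_sub_of_shrink [IsFiniteMeasure μ] {T T' : Ω → ℝ} {A : Set Ω} {a c : ℝ}
    (hA : MeasurableSet A) (hT : Integrable (fun ω => (T ω - c) ^ 2) μ)
    (hT' : ∀ ω, T' ω = (T ω - a) * A.indicator 1 ω + a) :
    ∫ ω, (T' ω - c) ^ 2 ∂μ = ∫ ω in A, (T ω - c) ^ 2 ∂μ + μ.real Aᶜ * (c - a) ^ 2 := by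
  have hsplit : (fun ω => (T' ω - c) ^ 2) =
      fun ω => A.indicator (fun ω => (T ω - c) ^ 2) ω + Aᶜ.indicator (fun _ => (c - a) ^ 2) ω := by
    funext ω
    by_cases h : ω ∈ A <;> simp [hT', h, sub_sq_comm a c]
  rw [hsplit, integral_add (hT.indicator hA) ((integrable_const _).indicator hA.compl),
    integral_indicator hA, integral_indicator_const _ hA.compl, smul_eq_mul]

end MeasureTheory

theorem stmt15_general {Ω : Type*} [MeasurableSpace Ω] (μ : Measure Ω) [IsProbabilityMeasure μ]
    (T : ℕ → Ω → ℝ) (A : ℕ → Set Ω) (hA : ∀ n, MeasurableSet (A n))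
    (ψθ : ℕ → ℝ) (ψ₀ : ℝ) (σ : ℕ → ℝ) (hσ : ∀ n, 0 < σ n)
    (Ttilde : ℕ → Ω → ℝ)
    (hTtilde : ∀ n ω, Ttilde n ω = (T n ω - ψ₀) * ((A n).indicator (1 : Ω → ℝ) ω) + ψ₀)
    -- the filtering probability tends to 1:
    (hfilt : Tendsto (fun n => (μ (A n)ᶜ).toReal) atTop (nhds 1))
    -- uniform integrability of the normalized squared errors:
    (hUI : UnifIntegrable (fun n ω => ((T n ω - ψθ n) / σ n) ^ 2) 1 μ)
    (hInt : ∀ n, MemLp (T n) 2 μ)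
    -- asymptotically unbiased with matching variance:
    (hvar : Tendsto (fun n => (∫ ω, (T n ω - ψθ n) ^ 2 ∂μ) / (σ n) ^ 2) atTop (nhds 1))
    (K : ℝ)
    (hK : Tendsto (fun n => (ψθ n - ψ₀) / σ n) atTop (nhds K)) :
    Tendsto (fun n => (∫ ω, (Ttilde n ω - ψθ n) ^ 2 ∂μ) / (∫ ω, (T n ω - ψθ n) ^ 2 ∂μ))
      atTop (nhds (K ^ 2)) := by
  have hμA : Tendsto (fun n => μ (A n)) atTop (𝓝 0) := by
    have hreal : Tendsto (fun n => μ.real (A n)) atTop (𝓝 0) := by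
      simpa only [← measureReal_def, probReal_compl_eq_one_sub (hA _), sub_sub_cancel, sub_self]
        using tendsto_const_nhds (x := (1 : ℝ)).sub hfilt
    exact (ENNReal.tendsto_toReal_iff (fun _ => measure_ne_top _ _) ENNReal.zero_ne_top).1
      (by rwa [ENNReal.toReal_zero])
  have hnum : ∀ n, (∫ ω, (Ttilde n ω - ψθ n) ^ 2 ∂μ) / σ n ^ 2 =
      ∫ ω in A n, ((T n ω - ψθ n) / σ n) ^ 2 ∂μ + μ.real (A n)ᶜ * ((ψθ n - ψ₀) / σ n) ^ 2 := by
    intro n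
    rw [integral_sq_sub_of_shrink (hA n) ((hInt n).sub (memLp_const _)).integrable_sq (hTtilde n),
      add_div, ← integral_div]
    simp only [div_pow, mul_div_assoc]
  have hnum_lim : Tendsto (fun n => (∫ ω, (Ttilde n ω - ψθ n) ^ 2 ∂μ) / σ n ^ 2)
      atTop (𝓝 (K ^ 2)) := by
    have hsum := (hUI.tendsto_setIntegral hA hμA).add (hfilt.mul (hK.pow 2))
    rw [zero_add, one_mul] at hsum
    exact hsum.congr fun n => (hnum n).symm
  have hratio := hnum_lim.div hvar one_ne_zero
  rw [div_one] at hratio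
  exact hratio.congr fun n => div_div_div_cancel_right₀ (pow_ne_zero 2 (hσ n).ne') _ _

theorem stmt15 {Ω : Type*} [MeasurableSpace Ω] (μ : Measure Ω) [IsProbabilityMeasure μ]
    (T : ℕ → Ω → ℝ) (A : ℕ → Set Ω) (hA : ∀ n, MeasurableSet (A n))
    (ψθ : ℕ → ℝ) (ψ₀ : ℝ) (σ : ℕ → ℝ) (hσ : ∀ n, 0 < σ n)
    (Ttilde : ℕ → Ω → ℝ)
    (hTtilde : ∀ n ω, Ttilde n ω = (T n ω - ψ₀) * ((A n).indicator (1 : Ω → ℝ) ω) + ψ₀)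
    -- the filtering probability tends to 1:
    (hfilt : Tendsto (fun n => (μ (A n)ᶜ).toReal) atTop (nhds 1))
    -- uniform integrability of the normalized squared errors:
    (hUI : UnifIntegrable (fun n ω => ((T n ω - ψθ n) / σ n) ^ 2) 1 μ)
    (hInt : ∀ n, MemLp (T n) 2 μ)
    -- asymptotically unbiased with matching variance:
    (hvar : Tendsto (fun n => (∫ ω, (T n ω - ψθ n) ^ 2 ∂μ) / (σ n) ^ 2) atTop (nhds 1))
    (K : ℝ) (hK0 : 0 ≤ K)
    (hK : Tendsto (fun n => (ψθ n - ψ₀) / σ n) atTop (nhds K)) :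
    Tendsto (fun n => (∫ ω, (Ttilde n ω - ψθ n) ^ 2 ∂μ) / (∫ ω, (T n ω - ψθ n) ^ 2 ∂μ))
      atTop (nhds (K ^ 2)) :=
  stmt15_general μ T A hA ψθ ψ₀ σ hσ Ttilde hTtilde hfilt hUI hInt hvar K hK
end

section
/- Let X ~ N(μ, 1/n) i.i.d. sample mean model and define the Hodges-type estimator μ̃ = X̄·1_{|X̄| > n^{−1/4}}. If μ = 0 (fixed), then for every rate rₙ → ∞, rₙ(μ̃ − 0) → 0 in probability; i.e., μ̃ is super-efficient at 0, converging faster than any polynomial rate. -/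
open MeasureTheory ProbabilityTheory Filter
open scoped NNReal ENNReal Topology

/-!
By Chebyshev, `P(|X̄ₙ| ≥ n^(-1/4)) ≤ Var X̄ₙ / n^(-1/2) = n^(-1/2) → 0`. Outside this event `μ̃ₙ`
vanishes, hence so does `rₙ μ̃ₙ` whatever the sequence `rₙ` is, and a sequence that is zero
off sets of vanishing measure tends to `0` in measure.
-/

lemma tendstoInMeasure_zero_of_tendsto_measure_support {α ι E : Type*} [MeasurableSpace α]
    [NormedAddCommGroup E] {μ : Measure α} {l : Filter ι} {f : ι → α → E}
    (hf : Tendsto (fun i => μ (Function.support (f i))) l (𝓝 0)) :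
    TendstoInMeasure μ f l 0 := by
  rw [tendstoInMeasure_iff_dist]
  intro ε hε
  refine tendsto_of_tendsto_of_tendsto_of_le_of_le tendsto_const_nhds hf (fun _ => zero_le)
    fun i => measure_mono fun x hx => ?_
  simp only [Set.mem_ofPred_eq, Pi.zero_apply, dist_zero_right] at hx
  exact norm_pos_iff.mp (hε.trans_le hx)

lemma gaussianReal_abs_sub_ge_le (m : ℝ) (v : ℝ≥0) {c : ℝ} (hc : 0 < c) :
    gaussianReal m v {x | c ≤ |x - m|} ≤ ENNReal.ofReal (v / c ^ 2) := by
  simpa [integral_id_gaussianReal, variance_id_gaussianReal] using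
    meas_ge_le_variance_div_sq (μ := gaussianReal m v) (memLp_id_gaussianReal' 2 (by simp)) hc

lemma gaussianReal_inv_natCast_abs_gt_le {n : ℕ} (hn : 0 < n) :
    gaussianReal 0 (n : ℝ≥0)⁻¹ {x | (n : ℝ) ^ (-(1 / 4 : ℝ)) < |x|}
      ≤ ENNReal.ofReal ((n : ℝ) ^ (-(1 / 2 : ℝ))) := by
  have hn' : (0 : ℝ) < n := Nat.cast_pos.mpr hn
  have hvar : ((n : ℝ≥0)⁻¹ : ℝ≥0) / ((n : ℝ) ^ (-(1 / 4 : ℝ))) ^ 2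
      = (n : ℝ) ^ (-(1 / 2 : ℝ)) := by
    rw [← Real.rpow_natCast, ← Real.rpow_mul hn'.le, NNReal.coe_inv, NNReal.coe_natCast,
      ← Real.rpow_neg_one, ← Real.rpow_sub hn']
    norm_num
  calc gaussianReal 0 (n : ℝ≥0)⁻¹ {x | (n : ℝ) ^ (-(1 / 4 : ℝ)) < |x|}
      ≤ gaussianReal 0 (n : ℝ≥0)⁻¹ {x | (n : ℝ) ^ (-(1 / 4 : ℝ)) ≤ |x|} :=
        measure_mono <| Set.ofPred_subset_ofPred.mpr fun _ => le_of_lt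
    _ ≤ _ := by
        simpa only [sub_zero, hvar] using
          gaussianReal_abs_sub_ge_le 0 (n : ℝ≥0)⁻¹ (Real.rpow_pos_of_pos hn' (-(1 / 4 : ℝ)))

theorem stmt17_general {Ω : Type*} [MeasurableSpace Ω] (μ : Measure Ω) [IsProbabilityMeasure μ]
    (Xbar : ℕ → Ω → ℝ) (hmeas : ∀ n, Measurable (Xbar n))
    (hlaw : ∀ n : ℕ, 0 < n → μ.map (Xbar n) = gaussianReal 0 ((n : ℝ≥0))⁻¹)
    (μtilde : ℕ → Ω → ℝ)
    (hμtilde : ∀ n ω, μtilde n ω =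
      if (n : ℝ) ^ (-(1 / 4 : ℝ)) < |Xbar n ω| then Xbar n ω else 0)
    (r : ℕ → ℝ) :
    TendstoInMeasure μ (fun n ω => r n * μtilde n ω) atTop 0 := by
  refine tendstoInMeasure_zero_of_tendsto_measure_support ?_
  have hrate : Tendsto (fun n : ℕ => ENNReal.ofReal ((n : ℝ) ^ (-(1 / 2 : ℝ)))) atTop (𝓝 0) := by
    simpa using ENNReal.tendsto_ofReal
      ((tendsto_rpow_neg_atTop (by norm_num : (0 : ℝ) < 1 / 2)).comp tendsto_natCast_atTop_atTop)
  refine tendsto_of_tendsto_of_tendsto_of_le_of_le' tendsto_const_nhds hrate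
    (Eventually.of_forall fun _ => zero_le) ?_
  filter_upwards [eventually_gt_atTop 0] with n hn
  have hsupport : Function.support (fun ω => r n * μtilde n ω)
      ⊆ Xbar n ⁻¹' {x | (n : ℝ) ^ (-(1 / 4 : ℝ)) < |x|} := fun ω hω => by
    by_contra hsmall
    have hzero : μtilde n ω = 0 := (hμtilde n ω).trans (if_neg hsmall)
    exact hω (by simp [hzero])
  calc μ (Function.support fun ω => r n * μtilde n ω)
      ≤ μ.map (Xbar n) {x | (n : ℝ) ^ (-(1 / 4 : ℝ)) < |x|} := by
        rw [Measure.map_apply (hmeas n) (measurableSet_lt measurable_const measurable_abs)]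
        exact measure_mono hsupport
    _ ≤ _ := hlaw n hn ▸ gaussianReal_inv_natCast_abs_gt_le hn

theorem stmt17 {Ω : Type*} [MeasurableSpace Ω] (μ : Measure Ω) [IsProbabilityMeasure μ]
    (Xbar : ℕ → Ω → ℝ) (hmeas : ∀ n, Measurable (Xbar n))
    (hlaw : ∀ n : ℕ, 0 < n → μ.map (Xbar n) = gaussianReal 0 ((n : ℝ≥0))⁻¹)
    (μtilde : ℕ → Ω → ℝ)
    (hμtilde : ∀ n ω, μtilde n ω =
      if (n : ℝ) ^ (-(1 / 4 : ℝ)) < |Xbar n ω| then Xbar n ω else 0)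
    (r : ℕ → ℝ) (hr : Tendsto r atTop atTop) :
    TendstoInMeasure μ (fun n ω => r n * μtilde n ω) atTop 0 :=
  stmt17_general μ Xbar hmeas hlaw μtilde hμtilde r
end

section
/- In the Hodges estimator setting with X̄ ~ N(μₙ, 1/n) and μ̃ = X̄·1_{|X̄| > n^{−1/4}}, if μₙ = n^{−1/3}, then √n(μ̃ − μₙ) → −∞ in probability; i.e., along this local sequence the normalized error of the Hodges estimator diverges. -/
open MeasureTheory ProbabilityTheory Filter
open scoped NNReal ENNReal
open Metric Topology

/-!
On the event `|X̄ₙ| ≤ n^(-1/4)` the Hodges estimator vanishes, so there the normalized error is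
`-√n μₙ = -n^(1/6)`, which is eventually below any `M`. This event contains the closed ball of
radius `n^(-1/4) - n^(-1/3)` around `μₙ`; in standard units (`σ = n^(-1/2)`) that radius is
`n^(1/4) - n^(1/6) → ∞`, so the Gaussian mass of the ball tends to `1`.
-/

lemma gaussianReal_closedBall_self (m : ℝ) {v : ℝ≥0} (hv : v ≠ 0) (r : ℝ) :
    gaussianReal m v (closedBall m r) = gaussianReal 0 1 (closedBall 0 (r / √v)) := by
  have hsqrt : 0 < √(v : ℝ) := Real.sqrt_pos.2 (by positivity)
  have hstd : (gaussianReal m v).map (fun x => (x - m) / √v) = gaussianReal 0 1 := by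
    rw [show (fun x => (x - m) / √v) = (· / √v) ∘ (· - m) from rfl,
      ← Measure.map_map (by fun_prop) (by fun_prop), gaussianReal_map_sub_const,
      gaussianReal_map_div_const, sub_self, zero_div]
    congr 1
    ext
    simp [Real.sq_sqrt, hv]
  rw [← hstd, Measure.map_apply (by fun_prop) measurableSet_closedBall]
  congr 1
  ext x
  simp [Real.dist_eq, abs_of_pos hsqrt, div_le_div_iff_of_pos_right hsqrt]

lemma tendsto_measure_closedBall_atTop {α : Type*} [PseudoMetricSpace α] [MeasurableSpace α]
    (μ : Measure α) (x : α) :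
    Tendsto (fun r : ℝ => μ (closedBall x r)) atTop (𝓝 (μ Set.univ)) := by
  have hunion : ⋃ r : ℝ, closedBall x r = Set.univ :=
    Set.eq_univ_of_forall fun y => Set.mem_iUnion.2 ⟨dist y x, mem_closedBall.2 le_rfl⟩
  simpa [hunion, Function.comp_def] using tendsto_measure_iUnion_atTop (μ := μ)
    (fun _ _ hrs => closedBall_subset_closedBall hrs : Monotone (closedBall x))

lemma tendsto_gaussianReal_closedBall_self {ι : Type*} {l : Filter ι} {m : ι → ℝ}
    {v : ι → ℝ≥0} {r : ι → ℝ} (hv : ∀ᶠ i in l, v i ≠ 0)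
    (hr : Tendsto (fun i => r i / √(v i)) l atTop) :
    Tendsto (fun i => gaussianReal (m i) (v i) (closedBall (m i) (r i))) l (𝓝 1) := by
  have h := (tendsto_measure_closedBall_atTop (gaussianReal 0 1) 0).comp hr
  rw [measure_univ] at h
  refine h.congr' ?_
  filter_upwards [hv] with i hi
  exact (gaussianReal_closedBall_self (m i) hi (r i)).symm

lemma tendsto_measureReal_one_of_le {Ω ι : Type*} [MeasurableSpace Ω] {μ : Measure Ω}
    [IsProbabilityMeasure μ] {l : Filter ι} {a : ι → ℝ≥0∞} {t : ι → Set Ω}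
    (ha : Tendsto a l (𝓝 1)) (hle : ∀ᶠ i in l, a i ≤ μ (t i)) :
    Tendsto (fun i => (μ (t i)).toReal) l (𝓝 1) := by
  have h : Tendsto (fun i => μ (t i)) l (𝓝 1) :=
    tendsto_of_tendsto_of_tendsto_of_le_of_le' ha tendsto_const_nhds hle
      (Eventually.of_forall fun _ => prob_le_one)
  simpa [Function.comp_def] using (ENNReal.tendsto_toReal ENNReal.one_ne_top).comp h

lemma tendsto_rpow_sub_rpow_atTop {a b : ℝ} (hb : 0 < b) (hba : b < a) :
    Tendsto (fun x : ℝ => x ^ a - x ^ b) atTop atTop := by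
  have h : Tendsto (fun x : ℝ => x ^ b * (x ^ (a - b) - 1)) atTop atTop :=
    (tendsto_rpow_atTop hb).atTop_mul_atTop₀
      (tendsto_atTop_add_const_right _ _ (tendsto_rpow_atTop (sub_pos.2 hba)))
  refine h.congr' ?_
  filter_upwards [eventually_gt_atTop 0] with x hx
  rw [mul_sub, mul_one, ← Real.rpow_add hx, add_sub_cancel]

lemma Real.sqrt_mul_rpow {x : ℝ} (hx : 0 < x) (a : ℝ) : √x * x ^ a = x ^ (1 / 2 + a) := by
  rw [Real.sqrt_eq_rpow, ← Real.rpow_add hx]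

theorem stmt18 {Ω : Type*} [MeasurableSpace Ω] (μ : Measure Ω) [IsProbabilityMeasure μ]
    (Xbar : ℕ → Ω → ℝ) (hmeas : ∀ n, Measurable (Xbar n))
    (μloc : ℕ → ℝ) (hμloc : ∀ n : ℕ, μloc n = (n : ℝ) ^ (-(1 / 3 : ℝ)))
    (hlaw : ∀ n : ℕ, 0 < n → μ.map (Xbar n) = gaussianReal (μloc n) ((n : ℝ≥0))⁻¹)
    (μtilde : ℕ → Ω → ℝ)
    (hμtilde : ∀ n ω, μtilde n ω =
      if (n : ℝ) ^ (-(1 / 4 : ℝ)) < |Xbar n ω| then Xbar n ω else 0) :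
    ∀ M : ℝ, Tendsto
      (fun n : ℕ => (μ {ω | Real.sqrt (n : ℝ) * (μtilde n ω - μloc n) ≤ M}).toReal)
      atTop (nhds 1) := by
  intro M
  have hvar : ∀ᶠ n : ℕ in atTop, ((n : ℝ≥0))⁻¹ ≠ 0 :=
    (eventually_gt_atTop 0).mono fun n hn => by positivity
  have hradius : Tendsto (fun n : ℕ =>
      ((n : ℝ) ^ (-(1 / 4 : ℝ)) - μloc n) / √(((n : ℝ≥0))⁻¹ : ℝ≥0)) atTop atTop := by
    refine ((tendsto_rpow_sub_rpow_atTop (a := 1 / 4) (b := 1 / 6) (by norm_num)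
      (by norm_num)).comp tendsto_natCast_atTop_atTop).congr' ?_
    filter_upwards [eventually_gt_atTop 0] with n hn
    have hn' : (0 : ℝ) < n := by exact_mod_cast hn
    rw [NNReal.coe_inv, NNReal.coe_natCast, Real.sqrt_inv, div_inv_eq_mul, mul_comm, mul_sub,
      hμloc, Real.sqrt_mul_rpow hn', Real.sqrt_mul_rpow hn']
    norm_num
  have hdrift : Tendsto (fun n : ℕ => √(n : ℝ) * μloc n) atTop atTop := by
    refine ((tendsto_rpow_atTop (by norm_num : (0 : ℝ) < 1 / 6)).comp
      tendsto_natCast_atTop_atTop).congr' ?_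
    filter_upwards [eventually_gt_atTop 0] with n hn
    rw [hμloc, Real.sqrt_mul_rpow (by exact_mod_cast hn)]
    norm_num
  refine tendsto_measureReal_one_of_le 
    (tendsto_gaussianReal_closedBall_self (m := μloc) hvar hradius) ?_
  filter_upwards [eventually_gt_atTop 0, hdrift.eventually_ge_atTop (-M)] with n hn hM
  rw [← hlaw n hn, Measure.map_apply (hmeas n) measurableSet_closedBall]
  refine measure_mono fun ω hω => ?_
  have hsmall : |Xbar n ω| ≤ (n : ℝ) ^ (-(1 / 4 : ℝ)) := by
    have hμ : 0 ≤ μloc n := hμloc n ▸ by positivity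
    have := abs_sub_abs_le_abs_sub (Xbar n ω) (μloc n)
    rw [abs_of_nonneg hμ] at this
    rw [Set.mem_preimage, mem_closedBall, Real.dist_eq] at hω
    linarith
  simp only [Set.mem_ofPred_eq, hμtilde, if_neg (not_lt.2 hsmall)]
  linarith
end

section
/- Let X̄ₙ, Ȳₙ be independent with X̄ₙ ~ N(γₙ, 1/n), Ȳₙ ~ N(βₙ, 1/n). If δ > 1 and max{ lim n^δ γₙβₙ, lim n^{δ−1/2}√(n⁻¹ + γₙ² + βₙ²) } = ∞, then P(|X̄ₙȲₙ| < c n^{−δ}) → 0 for every constant c > 0; i.e., the filtration probability L equals 0. -/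
open MeasureTheory ProbabilityTheory Filter
open scoped NNReal

/-
If |X Y| < ε then |X| < √ε or |Y| < √ε. A Gaussian with variance 1/n has density at most
√(n / 2π), so each of these events has probability O(√(ε n)). With ε = c n^{-δ} and δ > 1
this is O(n^{(1-δ)/2}) → 0.
-/

open Real

lemma gaussianPDFReal_le (m : ℝ) (v : ℝ≥0) (x : ℝ) :
    gaussianPDFReal m v x ≤ (√(2 * π * v))⁻¹ :=
  mul_le_of_le_one_right (by positivity) <| exp_le_one_iff.2 <|
    div_nonpos_of_nonpos_of_nonneg (neg_nonpos.2 (sq_nonneg _)) (by positivity)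

lemma gaussianReal_Ioo_le (m : ℝ) {v : ℝ≥0} (hv : v ≠ 0) (a b : ℝ) :
    gaussianReal m v (Set.Ioo a b) ≤ ENNReal.ofReal ((b - a) * (√(2 * π * v))⁻¹) :=
  calc gaussianReal m v (Set.Ioo a b)
      ≤ ∫⁻ _ in Set.Ioo a b, ENNReal.ofReal (√(2 * π * v))⁻¹ := by
        rw [gaussianReal_apply m hv]
        exact lintegral_mono fun x => ENNReal.ofReal_le_ofReal (gaussianPDFReal_le m v x)
    _ = ENNReal.ofReal ((b - a) * (√(2 * π * v))⁻¹) := by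
        rw [setLIntegral_const, Real.volume_Ioo, mul_comm, ENNReal.ofReal_mul' (by positivity)]

lemma gaussianReal_real_abs_lt_le (m : ℝ) {v : ℝ≥0} (hv : v ≠ 0) {t : ℝ} (ht : 0 ≤ t) :
    (gaussianReal m v).real {x | |x| < t} ≤ 2 * t * (√(2 * π * v))⁻¹ := by
  have hIoo : {x : ℝ | |x| < t} = Set.Ioo (-t) t := by ext; simp [abs_lt]
  rw [hIoo, measureReal_def]
  refine ENNReal.toReal_le_of_le_ofReal (by positivity) ?_
  simpa [two_mul] using gaussianReal_Ioo_le m hv (-t) t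

lemma hasLaw_of_map_eq {Ω α : Type*} [MeasurableSpace Ω] [MeasurableSpace α] {μ : Measure Ω}
    {ν : Measure α} [NeZero ν] {X : Ω → α} (h : μ.map X = ν) : HasLaw X ν μ :=
  ⟨.of_map_ne_zero (h ▸ NeZero.ne ν), h⟩

lemma measureReal_abs_mul_lt_le {Ω : Type*} [MeasurableSpace Ω] (μ : Measure Ω)
    [IsFiniteMeasure μ] (X Y : Ω → ℝ) {ε : ℝ} (hε : 0 ≤ ε) :
    μ.real {ω | |X ω * Y ω| < ε} ≤ μ.real {ω | |X ω| < √ε} + μ.real {ω | |Y ω| < √ε} := by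
  refine (measureReal_mono fun ω hω => ?_).trans (measureReal_union_le _ _)
  by_contra hmem
  simp only [Set.mem_union, Set.mem_ofPred_eq, not_or, not_lt] at hω hmem
  have : ε ≤ |X ω * Y ω| := by
    rw [abs_mul, ← Real.mul_self_sqrt hε]
    exact mul_le_mul hmem.1 hmem.2 (Real.sqrt_nonneg ε) (abs_nonneg _)
  exact hω.not_ge this

lemma tendsto_natCast_rpow_neg_mul_self {δ : ℝ} (hδ : 1 < δ) :
    Tendsto (fun n : ℕ => (n : ℝ) ^ (-δ) * n) atTop (nhds 0) := by
  refine ((tendsto_rpow_neg_atTop (sub_pos.2 hδ)).comp tendsto_natCast_atTop_atTop).congr' ?_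
  filter_upwards [eventually_ne_atTop 0] with n hn
  simp [show -(δ - 1) = -δ + 1 by ring, Real.rpow_add_one (Nat.cast_ne_zero.2 hn)]

lemma tendsto_sqrt_rpow_neg_mul_sqrt_inv {δ : ℝ} (hδ : 1 < δ) (c : ℝ) :
    Tendsto (fun n : ℕ => √(c * (n : ℝ) ^ (-δ)) * (√(2 * π * (n : ℝ)⁻¹))⁻¹) atTop (nhds 0) := by
  have h := (((tendsto_natCast_rpow_neg_mul_self hδ).const_mul (c / (2 * π))).sqrt)
  rw [mul_zero, Real.sqrt_zero] at h
  refine h.congr' ?_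
  filter_upwards [eventually_ne_atTop 0] with n hn
  rw [← Real.sqrt_inv, ← Real.sqrt_mul' _ (by positivity)]
  congr 1
  field_simp

theorem stmt19_general {Ω : Type*} [MeasurableSpace Ω] (μ : Measure Ω) [IsProbabilityMeasure μ]
    (Xbar Ybar : ℕ → Ω → ℝ)
    (γ β : ℕ → ℝ)
    (hX : ∀ n : ℕ, 0 < n → μ.map (Xbar n) = gaussianReal (γ n) ((n : ℝ≥0))⁻¹)
    (hY : ∀ n : ℕ, 0 < n → μ.map (Ybar n) = gaussianReal (β n) ((n : ℝ≥0))⁻¹)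
    (δ : ℝ) (hδ : 1 < δ) :
    ∀ c : ℝ, 0 < c →
      Tendsto (fun n => (μ {ω | |Xbar n ω * Ybar n ω| < c * (n : ℝ) ^ (-δ)}).toReal)
        atTop (nhds 0) := by
  intro c hc
  have hbound := (tendsto_sqrt_rpow_neg_mul_sqrt_inv hδ c).const_mul 4
  rw [mul_zero] at hbound
  refine squeeze_zero' (.of_forall fun _ => ENNReal.toReal_nonneg) ?_ hbound
  filter_upwards [eventually_gt_atTop 0] with n hn
  have hv : ((n : ℝ≥0))⁻¹ ≠ 0 := by simp [hn.ne']
  have hε : 0 ≤ c * (n : ℝ) ^ (-δ) := by positivity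
  have hmeas : MeasurableSet {x : ℝ | |x| < √(c * (n : ℝ) ^ (-δ))} :=
    measurableSet_lt measurable_abs measurable_const
  have hXlaw := (hasLaw_of_map_eq (hX n hn)).measureReal_eq hmeas
  have hYlaw := (hasLaw_of_map_eq (hY n hn)).measureReal_eq hmeas
  have hXn := gaussianReal_real_abs_lt_le (γ n) hv (Real.sqrt_nonneg (c * (n : ℝ) ^ (-δ)))
  have hYn := gaussianReal_real_abs_lt_le (β n) hv (Real.sqrt_nonneg (c * (n : ℝ) ^ (-δ)))
  push_cast at hXn hYn
  rw [← measureReal_def]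
  linarith [measureReal_abs_mul_lt_le μ (Xbar n) (Ybar n) hε]

theorem stmt19 {Ω : Type*} [MeasurableSpace Ω] (μ : Measure Ω) [IsProbabilityMeasure μ]
    (Xbar Ybar : ℕ → Ω → ℝ)
    (hXmeas : ∀ n, Measurable (Xbar n)) (hYmeas : ∀ n, Measurable (Ybar n))
    (γ β : ℕ → ℝ)
    (hX : ∀ n : ℕ, 0 < n → μ.map (Xbar n) = gaussianReal (γ n) ((n : ℝ≥0))⁻¹)
    (hY : ∀ n : ℕ, 0 < n → μ.map (Ybar n) = gaussianReal (β n) ((n : ℝ≥0))⁻¹)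
    (hind : ∀ n, IndepFun (Xbar n) (Ybar n) μ)
    (δ : ℝ) (hδ : 1 < δ)
    (hdiv : Tendsto (fun n : ℕ => (n : ℝ) ^ δ * γ n * β n) atTop atTop ∨
      Tendsto (fun n : ℕ => (n : ℝ) ^ (δ - 1 / 2) *
        Real.sqrt ((n : ℝ)⁻¹ + (γ n) ^ 2 + (β n) ^ 2)) atTop atTop) :
    ∀ c : ℝ, 0 < c →
      Tendsto (fun n => (μ {ω | |Xbar n ω * Ybar n ω| < c * (n : ℝ) ^ (-δ)}).toReal)
        atTop (nhds 0) :=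
  stmt19_general μ Xbar Ybar γ β hX hY δ hδ
end
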